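/- Let R be a noncommutative Poisson ring, let (q_i)_{i∈I}, (p_i)_{i∈I} be finite families of elements of R, and set e := Σ_{i∈I} {q_i, p_i}. If A, B ∈ R satisfy e·[A,B] = [A,B], then [A,B] = (Σ_{i∈I} [q_i, p_i]) · {A,B}. -/
import Mathlib


/-- A noncommutative Poisson ring structure on a unital associative ring `R`:
a bracket that is additive in each argument, alternating, satisfies the
Jacobi identity and the Leibniz rule with respect to the ring product. -/
structure NCPoissonStructure (R : Type*) [Ring R] where
  bracket : R → R → R
  add_left : ∀ a b c : R, bracket (a + b) c = bracket a c + bracket b c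
  add_right : ∀ a b c : R, bracket a (b + c) = bracket a b + bracket a c
  alternating : ∀ a : R, bracket a a = 0
  jacobi : ∀ a b c : R,
    bracket a (bracket b c) + bracket b (bracket c a) + bracket c (bracket a b) = 0
  leibniz : ∀ a b c : R, bracket a (b * c) = bracket a b * c + b * bracket a c

/-- Antisymmetry of the bracket. -/
lemma NCPoissonStructure.antisymm {R : Type*} [Ring R] (P : NCPoissonStructure R)
    (a b : R) : P.bracket a b = - P.bracket b a := by
  have h := P.alternating (a + b)
  rw [P.add_left, P.add_right, P.add_right, P.alternating, P.alternating] at h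
  have h' : P.bracket a b + P.bracket b a = 0 := by
    rw [zero_add, add_zero] at h; exact h
  exact eq_neg_of_add_eq_zero_left h'

/-- Leibniz rule in the first argument. -/
lemma NCPoissonStructure.leibniz_left {R : Type*} [Ring R] (P : NCPoissonStructure R)
    (a b c : R) : P.bracket (a * b) c = P.bracket a c * b + a * P.bracket b c := by
  rw [P.antisymm (a * b) c, P.leibniz, P.antisymm c a, P.antisymm c b]
  noncomm_ring

/-- Farkas–Letzter identity: `{a,c}·[b,d] = [a,c]·{b,d}`. -/
lemma NCPoissonStructure.bracket_mul_comm {R : Type*} [Ring R] (P : NCPoissonStructure R)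
    (a b c d : R) :
    P.bracket a c * (b * d - d * b) = (a * c - c * a) * P.bracket b d := by
  have h1 : P.bracket (a * b) (c * d)
      = (P.bracket a c * b + a * P.bracket b c) * d
        + c * (P.bracket a d * b + a * P.bracket b d) := by
    rw [P.leibniz, P.leibniz_left, P.leibniz_left]
  have h2 : P.bracket (a * b) (c * d)
      = (P.bracket a c * d + c * P.bracket a d) * b
        + a * (P.bracket b c * d + c * P.bracket b d) := by
    rw [P.leibniz_left, P.leibniz, P.leibniz]
  have h12 := h1.symm.trans h2
  have hz : P.bracket a c * (b * d - d * b) - (a * c - c * a) * P.bracket b d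
      = ((P.bracket a c * b + a * P.bracket b c) * d
        + c * (P.bracket a d * b + a * P.bracket b d))
        - ((P.bracket a c * d + c * P.bracket a d) * b
        + a * (P.bracket b c * d + c * P.bracket b d)) := by
    noncomm_ring
  rw [h12, sub_self] at hz
  exact sub_eq_zero.mp hz

/-- Local version used for non-compact manifolds: if `e := ∑ i, {q i, p i}` satisfies
`e·[A,B] = [A,B]`, then `[A,B] = (∑ i, [q i, p i]) · {A,B}`. -/
theorem commutator_eq_Zn_mul_bracket_of_local_unit
    {R : Type*} [Ring R] (P : NCPoissonStructure R)
    {I : Type*} [Fintype I] (q p : I → R) (A B : R)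
    (h : (∑ i, P.bracket (q i) (p i)) * (A * B - B * A) = A * B - B * A) :
    A * B - B * A = (∑ i, (q i * p i - p i * q i)) * P.bracket A B := by
  calc A * B - B * A = (∑ i, P.bracket (q i) (p i)) * (A * B - B * A) := h.symm
    _ = ∑ i, P.bracket (q i) (p i) * (A * B - B * A) := by rw [Finset.sum_mul]
    _ = ∑ i, (q i * p i - p i * q i) * P.bracket A B := by
        refine Finset.sum_congr rfl fun i _ => ?_
        exact P.bracket_mul_comm (q i) A (p i) B
    _ = (∑ i, (q i * p i - p i * q i)) * P.bracket A B := by rw [Finset.sum_mul]
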